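/- arXiv:math/0412208 — 5 statements merged into one kernel-verified Lean document; each statement's English description precedes it below -/
import Mathlib

section
/- Let n ≥ 2. The function F : 𝒳_n → ℝ defined by F(A) = √|det(adj A)| · ∫_{ℝⁿ_{≥0}} exp(−xᵀ adj(A) x) dx admits a continuous extension to the closure of 𝒳_n in ℝ^{n×n}. -/
/-!
With `B = A^{1/2}` and `T = |det B|⁻¹ • B` one has `Tᵀ (adj A) T = 1`, so the substitution
`x = T y` turns `F(A)` into the Gaussian measure `∫ 1[B y ≥ 0] exp (-|y|²) dy` of the cone
`{y | B y ≥ 0}`, the Jacobian `|det T|` cancelling `√|det adj A|`. This Gaussian measure depends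
continuously on `B` as long as no row of `B` vanishes: then the boundary hyperplanes
`{(B y)ᵢ = 0}` are null and dominated convergence applies. On the closure of `𝒳_n` the diagonal
of `A = B²` is `1`, so no row of `B` vanishes, and `A ↦ A^{1/2}` is continuous there.
-/

open Matrix MeasureTheory

/-- The space of angle Gram matrices of spherical simplices: symmetric, unit diagonal,
positive definite. -/
def Xset (n : ℕ) : Set (Matrix (Fin n) (Fin n) ℝ) :=
  {A | A.IsSymm ∧ (∀ i, A i i = 1) ∧ A.PosDef}

/-- `F(A) = √|det (adj A)| ∫_{ℝⁿ_{≥0}} exp (-xᵀ (adj A) x) dx`. -/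
noncomputable def Ffun (n : ℕ) (A : Matrix (Fin n) (Fin n) ℝ) : ℝ :=
  Real.sqrt |A.adjugate.det| *
    ∫ x in {x : Fin n → ℝ | ∀ i, 0 ≤ x i}, Real.exp (-(x ⬝ᵥ A.adjugate *ᵥ x))

open Filter Topology
open scoped MatrixOrder

theorem Matrix.transpose_mul_adjugate_mul_transpose_mul {ι R : Type*} [Fintype ι]
    [DecidableEq ι] [CommRing R] (B : Matrix ι ι R) :
    Bᵀ * (B * Bᵀ).adjugate * B = B.det ^ 2 • (1 : Matrix ι ι R) := by
  rw [adjugate_mul_distrib, mul_assoc, mul_assoc, ← mul_assoc Bᵀ, mul_adjugate, adjugate_mul,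
    det_transpose, smul_one_mul, smul_smul, sq]

theorem Matrix.integral_comp_mulVec {ι E : Type*} [Fintype ι] [DecidableEq ι]
    [NormedAddCommGroup E] [NormedSpace ℝ E] {T : Matrix ι ι ℝ} (hT : T.det ≠ 0)
    (f : (ι → ℝ) → E) : ∫ y, f (T *ᵥ y) = |T.det|⁻¹ • ∫ x, f x := by
  have hT_inj : Function.Injective (toLin' T) :=
    mulVec_injective_iff_isUnit.mpr ((isUnit_iff_isUnit_det T).mpr hT.isUnit)
  have hT_emb : MeasurableEmbedding (toLin' T) :=
    (LinearMap.isClosedEmbedding_of_injective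
      (LinearMap.ker_eq_bot.mpr hT_inj)).measurableEmbedding
  simp_rw [← toLin'_apply]
  rw [← hT_emb.integral_map, Real.map_matrix_volume_pi_eq_smul_volume_pi hT,
    integral_smul_measure, ENNReal.toReal_ofReal (abs_nonneg _), abs_inv]

theorem Matrix.isClosed_setOf_posSemidef {ι : Type*} [Fintype ι] :
    IsClosed {A : Matrix ι ι ℝ | A.PosSemidef} := by
  simp only [posSemidef_iff_dotProduct_mulVec, Set.ofPred_and, Set.ofPred_forall]
  exact (isClosed_eq continuous_id.matrix_conjTranspose continuous_id).inter
    (isClosed_iInter fun x => isClosed_le continuous_const (by fun_prop))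

theorem Matrix.row_ne_zero_of_mul_apply_ne_zero {l m n R : Type*} [Fintype m]
    [NonUnitalNonAssocSemiring R] {B : Matrix l m R} {C : Matrix m n R} {i : l} {j : n}
    (h : (B * C) i j ≠ 0) : B i ≠ 0 := by
  intro hBi
  simp [mul_apply, hBi] at h

theorem integrable_exp_neg_dotProduct_self {ι : Type*} [Fintype ι] :
    Integrable (fun y : ι → ℝ => Real.exp (-(y ⬝ᵥ y))) := by
  have h (y : ι → ℝ) : Real.exp (-(y ⬝ᵥ y)) = ∏ i, Real.exp (-1 * y i ^ 2) := by
    simp [← Real.exp_sum, dotProduct, sq]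
  simp_rw [h]
  exact Integrable.fintype_prod (f := fun _ : ι => fun r : ℝ => Real.exp (-1 * r ^ 2))
    fun _ => integrable_exp_neg_mul_sq one_pos

theorem volume_setOf_dotProduct_eq_zero {ι : Type*} [Fintype ι] {v : ι → ℝ} (hv : v ≠ 0) :
    volume {y : ι → ℝ | v ⬝ᵥ y = 0} = 0 := by
  refine Measure.addHaar_submodule volume (LinearMap.ker (dotProductBilin ℝ ℝ v))
    fun htop => hv ?_
  exact dotProduct_self_eq_zero.mp (LinearMap.mem_ker.mp (htop ▸ Submodule.mem_top : v ∈ _))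

theorem eventually_forall_nonneg_iff {m : Type*} [Finite m] {v : m → ℝ} (hv : ∀ i, v i ≠ 0) :
    ∀ᶠ w in 𝓝 v, (∀ i, 0 ≤ w i) ↔ ∀ i, 0 ≤ v i := by
  have (i : m) : ∀ᶠ w in 𝓝 v, 0 ≤ w i ↔ 0 ≤ v i := by
    rcases (hv i).lt_or_gt with hneg | hpos
    · filter_upwards [(continuous_apply i).continuousAt.eventually (eventually_lt_nhds hneg)]
        with w hw
      exact iff_of_false (not_le.mpr hw) (not_le.mpr hneg)
    · filter_upwards [(continuous_apply i).continuousAt.eventually (eventually_gt_nhds hpos)]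
        with w hw
      exact iff_of_true hw.le hpos.le
  filter_upwards [eventually_all.mpr this] with w hw
  exact forall_congr' hw

section GaussianCone

variable {m ι : Type*} [Fintype ι]

noncomputable def gaussianConeIntegral (B : Matrix m ι ℝ) : ℝ :=
  ∫ y, {y | ∀ i, 0 ≤ (B *ᵥ y) i}.indicator (fun y => Real.exp (-(y ⬝ᵥ y))) y

theorem gaussianConeIntegral_smul (B : Matrix m ι ℝ) {c : ℝ} (hc : 0 < c) :
    gaussianConeIntegral (c • B) = gaussianConeIntegral B := by
  simp only [gaussianConeIntegral, smul_mulVec, Pi.smul_apply, smul_eq_mul,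
    mul_nonneg_iff_of_pos_left hc]

theorem isClosed_setOf_nonneg_mulVec (B : Matrix m ι ℝ) :
    IsClosed {y : ι → ℝ | ∀ i, 0 ≤ (B *ᵥ y) i} :=
  isClosed_le (f := fun _ => (0 : m → ℝ)) continuous_const (by fun_prop)

theorem continuousAt_gaussianConeIntegral [Finite m] {B : Matrix m ι ℝ} (hB : ∀ i, B i ≠ 0) :
    ContinuousAt gaussianConeIntegral B := by
  have : FirstCountableTopology (Matrix m ι ℝ) :=
    inferInstanceAs (FirstCountableTopology (m → ι → ℝ))
  have hB_ae : ∀ᵐ y : ι → ℝ, ∀ i, (B *ᵥ y) i ≠ 0 :=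
    ae_all_iff.mpr fun i => measure_mono_null (fun y hy => of_not_not hy)
      (volume_setOf_dotProduct_eq_zero (hB i))
  refine continuousAt_of_dominated (bound := fun y => Real.exp (-(y ⬝ᵥ y)))
    (.of_forall fun B' => ?_) (.of_forall fun B' => .of_forall fun y => ?_)
    integrable_exp_neg_dotProduct_self ?_
  · exact (Continuous.aestronglyMeasurable (by fun_prop)).indicator
      (isClosed_setOf_nonneg_mulVec B').measurableSet
  · exact (norm_indicator_le_norm_self _ _).trans
      (Real.norm_of_nonneg (Real.exp_pos _).le).le
  filter_upwards [hB_ae] with y hy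
  have hsign : ∀ᶠ B' in 𝓝 B, (∀ i, 0 ≤ (B' *ᵥ y) i) ↔ ∀ i, 0 ≤ (B *ᵥ y) i :=
    ((continuous_id.matrix_mulVec continuous_const).tendsto B).eventually
      (eventually_forall_nonneg_iff hy)
  refine tendsto_const_nhds.congr' ?_
  filter_upwards [hsign] with B' hB'
  simp only [Set.indicator, Set.mem_ofPred_eq]
  split_ifs <;> tauto

theorem sqrt_abs_det_mul_setIntegral_orthant [DecidableEq ι] {M T : Matrix ι ι ℝ}
    (hT : Tᵀ * M * T = 1) :
    √|M.det| * ∫ x in {x : ι → ℝ | ∀ i, 0 ≤ x i}, Real.exp (-(x ⬝ᵥ M *ᵥ x)) =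
      gaussianConeIntegral T := by
  have hdet : T.det ^ 2 * M.det = 1 := by
    have := congrArg det hT
    rw [det_mul, det_mul, det_transpose, det_one] at this
    linear_combination this
  have hT0 : T.det ≠ 0 := fun h => by simp [h] at hdet
  have hsqrt : √|M.det| = |T.det|⁻¹ := by
    have hM : M.det = |T.det|⁻¹ ^ 2 := by
      rw [inv_pow, sq_abs]
      exact eq_inv_of_mul_eq_one_right hdet
    rw [hM, abs_sq, Real.sqrt_sq (by positivity)]
  have hquad (y : ι → ℝ) : (T *ᵥ y) ⬝ᵥ M *ᵥ (T *ᵥ y) = y ⬝ᵥ y := by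
    calc (T *ᵥ y) ⬝ᵥ M *ᵥ (T *ᵥ y) = y ⬝ᵥ (Tᵀ * M * T) *ᵥ y := by
          rw [← mulVec_mulVec, ← mulVec_mulVec, dotProduct_mulVec y, vecMul_transpose,
            dotProduct_comm]
      _ = y ⬝ᵥ y := by rw [hT, one_mulVec]
  have hS : MeasurableSet {x : ι → ℝ | ∀ i, 0 ≤ x i} := measurableSet_Ici (a := 0)
  rw [hsqrt, ← smul_eq_mul, ← integral_indicator hS, ← integral_comp_mulVec hT0]
  unfold gaussianConeIntegral
  congr 1 with y
  simp only [Set.indicator, Set.mem_ofPred_eq, hquad]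

theorem sqrt_abs_det_adjugate_mul_setIntegral_orthant [DecidableEq ι] {B : Matrix ι ι ℝ}
    (hB : B.det ≠ 0) :
    √|(B * Bᵀ).adjugate.det| *
        ∫ x in {x : ι → ℝ | ∀ i, 0 ≤ x i}, Real.exp (-(x ⬝ᵥ (B * Bᵀ).adjugate *ᵥ x)) =
      gaussianConeIntegral B := by
  have hT : (|B.det|⁻¹ • B)ᵀ * (B * Bᵀ).adjugate * (|B.det|⁻¹ • B) = 1 := by
    rw [transpose_smul, smul_mul, smul_mul, Matrix.mul_smul,
      transpose_mul_adjugate_mul_transpose_mul, smul_smul, smul_smul, ← sq_abs, ← sq, inv_pow,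
      inv_mul_cancel₀ (by positivity), one_smul]
  rw [sqrt_abs_det_mul_setIntegral_orthant hT, gaussianConeIntegral_smul B (by positivity)]

end GaussianCone

theorem Ffun_eq_gaussianConeIntegral_sqrt {n : ℕ} {A : Matrix (Fin n) (Fin n) ℝ}
    (hA : A.PosDef) : Ffun n A = gaussianConeIntegral (CFC.sqrt A) := by
  have hB_symm : (CFC.sqrt A)ᵀ = CFC.sqrt A :=
    isHermitian_iff_isSymm.mp (CFC.sqrt_nonneg A).posSemidef.isHermitian
  have hBB : CFC.sqrt A * (CFC.sqrt A)ᵀ = A := by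
    rw [hB_symm, CFC.sqrt_mul_sqrt_self A hA.posSemidef.nonneg]
  have hB_det : (CFC.sqrt A).det ≠ 0 := by
    have := hA.det_pos
    rw [← hBB, det_mul] at this
    exact left_ne_zero_of_mul this.ne'
  rw [Ffun]
  simpa only [hBB] using sqrt_abs_det_adjugate_mul_setIntegral_orthant hB_det

open scoped Matrix.Norms.L2Operator in
theorem continuousOn_gaussianConeIntegral_sqrt {ι : Type*} [Fintype ι] [DecidableEq ι] :
    ContinuousOn (fun A : Matrix ι ι ℝ => gaussianConeIntegral (CFC.sqrt A))
      {A | A.PosSemidef ∧ ∀ i, A i i = 1} := by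
  intro A ⟨hA, hA_diag⟩
  have hrow (i : ι) : CFC.sqrt A i ≠ 0 := by
    refine row_ne_zero_of_mul_apply_ne_zero (C := CFC.sqrt A) (j := i) ?_
    rw [CFC.sqrt_mul_sqrt_self A hA.nonneg, hA_diag i]
    exact one_ne_zero
  exact (continuousAt_gaussianConeIntegral hrow).comp_continuousWithinAt
    ((CFC.continuousOn_sqrt A hA.nonneg).mono fun B hB => hB.1.nonneg)

theorem closure_Xset_subset (n : ℕ) :
    closure (Xset n) ⊆ {A | A.PosSemidef ∧ ∀ i, A i i = 1} := by
  refine closure_minimal (fun A hA => ⟨hA.2.2.posSemidef, hA.2.1⟩) ?_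
  simp only [Set.ofPred_and, Set.ofPred_forall]
  exact isClosed_setOf_posSemidef.inter
    (isClosed_iInter fun i => isClosed_eq (continuous_id.matrix_elem i i) continuous_const)

theorem stmt1_general (n : ℕ) :
    ∃ G : Matrix (Fin n) (Fin n) ℝ → ℝ,
      ContinuousOn G (closure (Xset n)) ∧
      ∀ A ∈ Xset n, G A = Ffun n A :=
  ⟨fun A => gaussianConeIntegral (CFC.sqrt A),
    continuousOn_gaussianConeIntegral_sqrt.mono (closure_Xset_subset n),
    fun _ hA => (Ffun_eq_gaussianConeIntegral_sqrt hA.2.2).symm⟩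

/-- The function `F` on `𝒳_n` extends continuously to the closure of `𝒳_n`
in the space of n×n matrices. -/
theorem stmt1 (n : ℕ) (hn : 2 ≤ n) :
    ∃ G : Matrix (Fin n) (Fin n) ℝ → ℝ,
      ContinuousOn G (closure (Xset n)) ∧
      ∀ A ∈ Xset n, G A = Ffun n A :=
  stmt1_general n
end

section
/- Let B be a real symmetric (n+1)×(n+1) matrix such that every principal n×n submatrix of B (obtained by deleting the i-th row and i-th column, for each i) is positive definite, and such that det B ≤ 0. Then no entry of the adjugate matrix adj(B) is zero. -/
/-!
Let `y` be the `j`-th column of `adj B`, so that `B y = det B • eⱼ` and `yᵀ B y = det B · yⱼ`.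
The diagonal entry `yⱼ` is a principal `n × n` minor, hence positive, so `yᵀ B y ≤ 0`.
If `yᵢ = 0`, then `yᵀ B y` is also the quadratic form of the principal submatrix obtained by
deleting row and column `i`, evaluated at the restriction of `y`, which is nonzero since `yⱼ > 0`;
so `yᵀ B y > 0`, a contradiction.
-/

open Matrix

namespace Matrix

theorem adjugate_fin_succ_apply_self {R : Type*} [CommRing R] {n : ℕ}
    (A : Matrix (Fin (n + 1)) (Fin (n + 1)) R) (i : Fin (n + 1)) :
    A.adjugate i i = (A.submatrix ((↑) : {j // j ≠ i} → Fin (n + 1)) (↑)).det := by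
  have hsucc : A.submatrix i.succAbove i.succAbove =
      (A.submatrix ((↑) : {j // j ≠ i} → Fin (n + 1)) (↑)).submatrix
        (finSuccAboveEquiv i) (finSuccAboveEquiv i) := rfl
  rw [adjugate_fin_succ_eq_det_submatrix, ← two_mul, pow_mul, neg_one_sq, one_pow, one_mul,
    hsucc, det_submatrix_equiv_self]

theorem col_adjugate_dotProduct_mulVec {R ι : Type*} [CommRing R] [Fintype ι] [DecidableEq ι]
    (A : Matrix ι ι R) (j : ι) :
    A.adjugate.col j ⬝ᵥ (A *ᵥ A.adjugate.col j) = A.det * A.adjugate j j := by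
  rw [← mulVec_single_one, mulVec_mulVec, mul_adjugate, smul_mulVec, one_mulVec, dotProduct_smul,
    dotProduct_single_one, mulVec_single_one, col_apply, smul_eq_mul]

theorem dotProduct_mulVec_submatrix_subtype {R ι : Type*} [CommSemiring R] [Fintype ι]
    (p : ι → Prop) [DecidablePred p] (A : Matrix ι ι R) {x y : ι → R}
    (hx : ∀ k, ¬p k → x k = 0) (hy : ∀ k, ¬p k → y k = 0) :
    (fun k : Subtype p => x k) ⬝ᵥ (A.submatrix (↑) (↑) *ᵥ fun k : Subtype p => y k) =
      x ⬝ᵥ (A *ᵥ y) := by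
  have sum_subtype : ∀ f : ι → R, (∀ k, ¬p k → f k = 0) →
      ∑ k : Subtype p, f k = ∑ k, f k := fun f hf => by
    rw [← Fintype.sum_subtype_add_sum_subtype p f,
      Fintype.sum_eq_zero (fun k : {k // ¬p k} => f k) (fun k => hf k k.2), add_zero]
  have hmulVec : ∀ k : Subtype p, (A.submatrix (↑) (↑) *ᵥ fun k : Subtype p => y k) k =
      (A *ᵥ y) k := fun k =>
    sum_subtype (fun l => A k l * y l) (fun l hl => by rw [hy l hl, mul_zero])
  simp only [dotProduct, hmulVec]
  exact sum_subtype (fun k => x k * (A *ᵥ y) k) (fun k hk => by rw [hx k hk, zero_mul])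

theorem PosDef.dotProduct_mulVec_pos_of_submatrix {R ι : Type*} [CommRing R] [PartialOrder R]
    [StarRing R] [Fintype ι] {p : ι → Prop} [DecidablePred p] {A : Matrix ι ι R}
    (hA : (A.submatrix ((↑) : Subtype p → ι) (↑)).PosDef) {y : ι → R}
    (hy : ∀ k, ¬p k → y k = 0) (hy₀ : y ≠ 0) :
    0 < star y ⬝ᵥ (A *ᵥ y) := by
  have hz : (fun k : Subtype p => y k) ≠ 0 := fun hz => hy₀ <| funext fun k => by
    by_cases hk : p k
    · exact congrFun hz ⟨k, hk⟩
    · exact hy k hk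
  have hstar : ∀ k, ¬p k → star y k = 0 := fun k hk => by
    rw [Pi.star_apply, hy k hk, star_zero]
  rw [← dotProduct_mulVec_submatrix_subtype p A hstar hy]
  exact hA.dotProduct_mulVec_pos hz

end Matrix

theorem stmt9_general (n : ℕ) (B : Matrix (Fin (n + 1)) (Fin (n + 1)) ℝ)
    (hprin : ∀ i : Fin (n + 1),
      Matrix.PosDef (B.submatrix (fun j : {j : Fin (n + 1) // j ≠ i} => (j : Fin (n + 1)))
        (fun j : {j : Fin (n + 1) // j ≠ i} => (j : Fin (n + 1)))))
    (hdet : B.det ≤ 0) :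
    ∀ i j, B.adjugate i j ≠ 0 := by
  have hdiag : ∀ i, 0 < B.adjugate i i := fun i => by
    rw [adjugate_fin_succ_apply_self]
    exact (hprin i).det_pos
  intro i j hij
  have hcol_ne : B.adjugate.col j ≠ 0 := fun h => (hdiag j).ne' (congrFun h j)
  have hpos : 0 < star (B.adjugate.col j) ⬝ᵥ (B *ᵥ B.adjugate.col j) :=
    (hprin i).dotProduct_mulVec_pos_of_submatrix (fun k hk => by rwa [not_not.mp hk]) hcol_ne
  rw [star_trivial, col_adjugate_dotProduct_mulVec] at hpos
  exact (mul_nonpos_of_nonpos_of_nonneg hdet (hdiag j).le).not_gt hpos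

/-- If `B` is a real symmetric (n+1)×(n+1) matrix all of whose principal n×n submatrices
are positive definite and `det B ≤ 0`, then no entry of `adj(B)` is zero. -/
theorem stmt9 (n : ℕ) (B : Matrix (Fin (n + 1)) (Fin (n + 1)) ℝ) (hB : B.IsSymm)
    (hprin : ∀ i : Fin (n + 1),
      Matrix.PosDef (B.submatrix (fun j : {j : Fin (n + 1) // j ≠ i} => (j : Fin (n + 1)))
        (fun j : {j : Fin (n + 1) // j ≠ i} => (j : Fin (n + 1)))))
    (hdet : B.det ≤ 0) :
    ∀ i j, B.adjugate i j ≠ 0 :=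
  stmt9_general n B hprin hdet
end

section
/- Let n ≥ 2 and let A ∈ 𝒴_n. Then A has exactly one negative eigenvalue −λ (with λ > 0) and it is a simple eigenvalue; for every t ∈ [0, λ] all entries of adj(A + t·Id) are positive; and every eigenvector of A with eigenvalue −λ has all of its entries nonzero and of the same sign. -/
/-!
Write `A = U diag(d) Uᵀ` with `U` orthogonal. If two eigenvalues were `≤ 0`, the quadratic form
of `A` would be `≤ 0` on the plane spanned by their eigenvectors; this plane meets the hyperplane
`{w i = 0}`, on which the form is positive because the principal submatrix deleting `i` is positive
definite. Since `det A < 0`, exactly one eigenvalue `d k₀ = -λ` is negative.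

For `0 ≤ t ≤ λ`, `adj(A + t) = U diag(p) Uᵀ` with `p k = ∏_{l ≠ k} (d l + t) ≤ 0` for `k ≠ k₀`, so
the quadratic form of `adj(A + t)` is `≤ 0` on the hyperplane orthogonal to the `k₀`-th column `u`
of `U`. If the entry `(i, j)` vanished, the form would be positive on the plane spanned by `e i` and
`e j` (the diagonal entries are principal minors of `A + t`), which meets that hyperplane. So the
entries of `adj(A + t)` never vanish on `[0, λ]` and stay positive by continuity. At `t = λ` the
adjugate is `p k₀ • u uᵀ`, so the entries of `u` have one sign, and every eigenvector for `-λ` is a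
multiple of `u`.
-/

open Matrix

/-- The space of angle Gram matrices of hyperbolic simplices: symmetric, unit diagonal,
all entries of the adjugate positive, negative determinant, and all principal
(n-1)×(n-1) submatrices positive definite. -/
def Yset (n : ℕ) : Set (Matrix (Fin n) (Fin n) ℝ) :=
  {A | A.IsSymm ∧ (∀ i, A i i = 1) ∧ (∀ i j, 0 < A.adjugate i j) ∧ A.det < 0 ∧
    ∀ i : Fin n,
      Matrix.PosDef (A.submatrix (fun j : {j : Fin n // j ≠ i} => (j : Fin n))
        (fun j : {j : Fin n // j ≠ i} => (j : Fin n)))}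

open Polynomial Finset

theorem IsPreconnected.pos_of_ne_zero {X : Type*} [TopologicalSpace X] {s : Set X}
    (hs : IsPreconnected s) {f : X → ℝ} (hf : ContinuousOn f s) (hne : ∀ x ∈ s, f x ≠ 0)
    {a : X} (ha : a ∈ s) (hfa : 0 < f a) {x : X} (hx : x ∈ s) : 0 < f x := by
  by_contra! hfx
  obtain ⟨c, hc, hfc⟩ := hs.intermediate_value hx ha hf ⟨hfx, hfa.le⟩
  exact hne c hc hfc

theorem exists_mul_add_mul_eq_zero (p q : ℝ) : ∃ a b : ℝ, (a ≠ 0 ∨ b ≠ 0) ∧ a * p + b * q = 0 := by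
  by_cases hp : p = 0
  · exact ⟨1, 0, Or.inl one_ne_zero, by simp [hp]⟩
  · exact ⟨q, -p, Or.inr (neg_ne_zero.2 hp), by ring⟩

theorem forall_ne_zero_and_same_sign_of_mul_pos {ι : Type*} {v : ι → ℝ}
    (hv : ∀ i j, 0 < v i * v j) : (∀ i, v i ≠ 0) ∧ ((∀ i, 0 < v i) ∨ (∀ i, v i < 0)) := by
  refine ⟨fun i hi => by simpa [hi] using hv i i, ?_⟩
  by_cases hpos : ∃ i, 0 < v i
  · obtain ⟨i, hi⟩ := hpos
    exact Or.inl fun j => pos_of_mul_pos_right (hv i j) hi.le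
  · push Not at hpos
    exact Or.inr fun j => (hpos j).lt_of_ne fun hj => by simpa [hj] using hv j j

section Finite

variable {ι : Type*} [Fintype ι]

theorem exists_neg_forall_pos_of_prod_neg {d : ι → ℝ} (hprod : ∏ k, d k < 0)
    (hpair : ∀ k l, k ≠ l → 0 < d k ∨ 0 < d l) : ∃ k₀, d k₀ < 0 ∧ ∀ k ≠ k₀, 0 < d k := by
  obtain ⟨k₀, hk₀⟩ : ∃ k₀, d k₀ < 0 := by
    by_contra! h
    exact hprod.not_ge (prod_nonneg fun k _ => h k)
  exact ⟨k₀, hk₀, fun k hk => (hpair k k₀ hk).resolve_right hk₀.not_gt⟩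

theorem card_filter_eq_of_forall_pos {d : ι → ℝ} {k₀ : ι} (hd : ∀ k ≠ k₀, 0 < d k) {μ : ℝ}
    (hμ : μ ≤ 0) : #{k | d k = μ} = if μ = d k₀ then 1 else 0 := by
  rw [card_filter, sum_eq_single k₀ (fun k _ hk => if_neg fun h => ?_)
    (fun h => absurd (mem_univ k₀) h)]
  · exact if_congr eq_comm rfl rfl
  · linarith [hd k hk]

theorem Polynomial.rootMultiplicity_prod_X_sub_C {R : Type*} [CommRing R] [IsDomain R]
    [DecidableEq R] (d : ι → R) (a : R) :
    (∏ k, (X - C (d k))).rootMultiplicity a = #{k | d k = a} := by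
  have hmap : univ.val.map (fun k => X - C (d k)) = (univ.val.map d).map fun b => X - C b := by
    rw [Multiset.map_map]; rfl
  rw [← count_roots, prod_eq_multiset_prod, hmap, roots_multiset_prod_X_sub_C,
    Multiset.count_map, card_def, filter_val]
  simp only [eq_comm]

theorem prod_erase_nonpos [DecidableEq ι] {f : ι → ℝ} {k₀ : ι} (h₀ : f k₀ ≤ 0)
    (h : ∀ k ≠ k₀, 0 ≤ f k) {m : ι} (hm : m ≠ k₀) : ∏ l ∈ univ.erase m, f l ≤ 0 := by
  rw [← mul_prod_erase _ _ (mem_erase.2 ⟨hm.symm, mem_univ k₀⟩)]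
  exact mul_nonpos_of_nonpos_of_nonneg h₀
    (prod_nonneg fun l hl => h l (ne_of_mem_erase hl))

end Finite

namespace Matrix

variable {ι R : Type*} [Fintype ι] [CommRing R]

theorem dotProduct_mul_mul_transpose_mulVec (U M : Matrix ι ι R) (x : ι → R) :
    x ⬝ᵥ ((U * M * Uᵀ) *ᵥ x) = (Uᵀ *ᵥ x) ⬝ᵥ (M *ᵥ (Uᵀ *ᵥ x)) := by
  rw [← mulVec_mulVec, ← mulVec_mulVec, dotProduct_mulVec, mulVec_transpose]

variable [DecidableEq ι]

theorem adjugate_apply_self (A : Matrix ι ι R) (i : ι) :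
    A.adjugate i i = (A.submatrix ((↑) : {j // j ≠ i} → ι) (↑)).det := by
  rw [adjugate_apply, ← det_submatrix_equiv_self (Equiv.sumCompl (· ≠ i))]
  have hblocks : (A.updateRow i (Pi.single i 1)).submatrix (Equiv.sumCompl (· ≠ i))
      (Equiv.sumCompl (· ≠ i)) = fromBlocks (A.submatrix ((↑) : {j // j ≠ i} → ι) (↑))
        (of fun (a : {j // j ≠ i}) (b : {j // ¬ j ≠ i}) => A a b) 0 1 := by
    ext (a | a) (b | b)
    · simp [updateRow_apply, a.2]
    · simp [updateRow_apply, a.2]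
    · simp [updateRow_apply, not_not.mp a.2, b.2]
    · simp [updateRow_apply, not_not.mp a.2, not_not.mp b.2, one_apply, Subtype.ext_iff]
  rw [hblocks, det_fromBlocks_zero₂₁, det_one, mul_one]

theorem single_add_single_dotProduct_mulVec (M : Matrix ι ι R) (i j : ι) (a b : R) :
    (Pi.single i a + Pi.single j b) ⬝ᵥ (M *ᵥ (Pi.single i a + Pi.single j b)) =
      a * a * M i i + a * b * (M i j + M j i) + b * b * M j j := by
  simp only [mulVec_add, mulVec_single, add_dotProduct, single_dotProduct, Pi.add_apply,
    Pi.smul_apply, col_apply, MulOpposite.smul_eq_mul_unop, MulOpposite.unop_op]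
  ring

theorem dotProduct_diagonal_mulVec (d y : ι → R) :
    y ⬝ᵥ (diagonal d *ᵥ y) = ∑ k, d k * y k ^ 2 := by
  simp only [dotProduct, mulVec_diagonal]
  exact sum_congr rfl fun k _ => by ring

theorem dotProduct_mulVec_pos_of_posDef_submatrix {A : Matrix ι ι ℝ} {i : ι}
    (hA : (A.submatrix ((↑) : {j // j ≠ i} → ι) (↑)).PosDef) {w : ι → ℝ} (hwi : w i = 0)
    (hw : w ≠ 0) : 0 < w ⬝ᵥ (A *ᵥ w) := by
  have hsum (f : ι → ℝ) : ∑ j, f j * w j = ∑ j : {j // j ≠ i}, f j * w j := by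
    rw [Fintype.sum_eq_add_sum_subtype_ne _ i, hwi, mul_zero, zero_add]
  have hw' : (fun j : {j // j ≠ i} => w j) ≠ 0 := fun h => hw <| funext fun j => by
    by_cases hj : j = i
    · rw [hj, hwi, Pi.zero_apply]
    · exact congrFun h ⟨j, hj⟩
  refine (hA.dotProduct_mulVec_pos hw').trans_eq ?_
  rw [dotProduct_comm, dotProduct_comm w]
  simp only [dotProduct, mulVec, submatrix_apply, star_trivial, hsum]

theorem adjugate_add_smul_one_apply_self_pos {A : Matrix ι ι ℝ} {i : ι}
    (hA : (A.submatrix ((↑) : {j // j ≠ i} → ι) (↑)).PosDef) {t : ℝ} (ht : 0 ≤ t) :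
    0 < (A + t • 1).adjugate i i := by
  have hsub : (A + t • 1).submatrix (Subtype.val : {j // j ≠ i} → ι) Subtype.val =
      A.submatrix Subtype.val Subtype.val + t • (1 : Matrix {j // j ≠ i} {j // j ≠ i} ℝ) := by
    ext a b
    simp [one_apply, Subtype.ext_iff]
  rw [adjugate_apply_self, hsub]
  exact (hA.add_posSemidef (PosSemidef.one.smul ht)).det_pos

theorem IsSymm.exists_orthogonal_diagonalization {A : Matrix ι ι ℝ} (hA : A.IsSymm) :
    ∃ (U : Matrix ι ι ℝ) (d : ι → ℝ), Uᵀ * U = 1 ∧ A = U * diagonal d * Uᵀ := by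
  have hH : A.IsHermitian := by rwa [IsHermitian, conjTranspose_eq_transpose_of_trivial]
  refine ⟨hH.eigenvectorUnitary, hH.eigenvalues, ?_, ?_⟩
  · rw [← conjTranspose_eq_transpose_of_trivial, ← star_eq_conjTranspose]
    exact Unitary.star_mul_self_of_mem hH.eigenvectorUnitary.2
  · conv_lhs => rw [hH.spectral_theorem]
    rw [Unitary.conjStarAlgAut_apply, star_eq_conjTranspose, conjTranspose_eq_transpose_of_trivial]
    rfl

section OrthogonalConj

variable {U : Matrix ι ι R} (d : ι → R)

theorem det_mul_diagonal_mul_transpose (hU : Uᵀ * U = 1) :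
    (U * diagonal d * Uᵀ).det = ∏ k, d k := by
  rw [det_mul, det_mul, mul_right_comm, ← det_mul, mul_eq_one_comm.mp hU, det_one, one_mul,
    det_diagonal]

theorem charpoly_mul_diagonal_mul_transpose (hU : Uᵀ * U = 1) :
    (U * diagonal d * Uᵀ).charpoly = ∏ k, (X - C (d k)) := by
  rw [charpoly_mul_comm, ← Matrix.mul_assoc, hU, Matrix.one_mul, charpoly_diagonal]

theorem adjugate_mul_diagonal_mul_transpose (hU : Uᵀ * U = 1) :
    (U * diagonal d * Uᵀ).adjugate = U * diagonal (fun k => ∏ l ∈ univ.erase k, d l) * Uᵀ := by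
  have hadjU : U.adjugate = U.det • Uᵀ := by
    rw [← Matrix.mul_one U.adjugate, ← mul_eq_one_comm.mp hU, ← Matrix.mul_assoc, adjugate_mul,
      smul_mul_assoc, Matrix.one_mul]
  have hdet : U.det * U.det = 1 := by
    simpa only [det_mul, det_transpose, det_one] using congrArg det hU
  rw [adjugate_mul_distrib, adjugate_mul_distrib, ← adjugate_transpose, hadjU, adjugate_diagonal,
    transpose_smul, transpose_transpose]
  simp only [smul_mul_assoc, mul_smul_comm, smul_smul, hdet, one_smul, Matrix.mul_assoc]

theorem mul_diagonal_mul_transpose_apply (i j : ι) :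
    (U * diagonal d * Uᵀ) i j = ∑ k, d k * (U i k * U j k) := by
  rw [mul_apply]
  simp only [mul_diagonal, transpose_apply]
  exact sum_congr rfl fun k _ => by ring

theorem mul_diagonal_mul_transpose_add_smul_one (hU : Uᵀ * U = 1) (t : R) :
    U * diagonal d * Uᵀ + t • 1 = U * diagonal (fun k => d k + t) * Uᵀ := by
  rw [← diagonal_add d, ← smul_one_eq_diagonal, Matrix.mul_add, Matrix.add_mul, Matrix.mul_smul,
    Matrix.mul_one, Matrix.smul_mul, mul_eq_one_comm.mp hU]

theorem eq_smul_of_mul_diagonal_mul_transpose_mulVec_eq_zero [IsDomain R] (hU : Uᵀ * U = 1)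
    {k₀ : ι} (hd : ∀ k ≠ k₀, d k ≠ 0) {x : ι → R} (hx : (U * diagonal d * Uᵀ) *ᵥ x = 0) :
    x = (Uᵀ *ᵥ x) k₀ • Uᵀ k₀ := by
  have hdiag : diagonal d *ᵥ (Uᵀ *ᵥ x) = 0 := by
    simpa only [mulVec_mulVec, ← Matrix.mul_assoc, hU, Matrix.one_mul, mulVec_zero]
      using congrArg (Uᵀ *ᵥ ·) hx
  have hcoord : Uᵀ *ᵥ x = Pi.single k₀ ((Uᵀ *ᵥ x) k₀) := by
    ext k
    rcases eq_or_ne k k₀ with rfl | hk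
    · rw [Pi.single_eq_same]
    · have := congrFun hdiag k
      rw [mulVec_diagonal, Pi.zero_apply] at this
      rw [Pi.single_eq_of_ne hk, (mul_eq_zero.mp this).resolve_left (hd k hk)]
  calc x = U *ᵥ (Uᵀ *ᵥ x) := by rw [mulVec_mulVec, mul_eq_one_comm.mp hU, one_mulVec]
    _ = (Uᵀ *ᵥ x) k₀ • Uᵀ k₀ := by
      rw [hcoord, mulVec_single]
      ext i
      simp [mul_comm]

end OrthogonalConj

section Real

variable {U : Matrix ι ι ℝ} {d : ι → ℝ}

theorem dotProduct_mul_diagonal_mul_transpose_mulVec_nonpos {p : ι → ℝ} {k₀ : ι}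
    (hp : ∀ k ≠ k₀, p k ≤ 0) {x : ι → ℝ} (hx : (Uᵀ *ᵥ x) k₀ = 0) :
    x ⬝ᵥ ((U * diagonal p * Uᵀ) *ᵥ x) ≤ 0 := by
  rw [dotProduct_mul_mul_transpose_mulVec, dotProduct_diagonal_mulVec]
  refine sum_nonpos fun k _ => ?_
  rcases eq_or_ne k k₀ with rfl | hk
  · simp [hx]
  · exact mul_nonpos_of_nonpos_of_nonneg (hp k hk) (sq_nonneg _)

theorem mul_diagonal_mul_transpose_apply_ne_zero {p : ι → ℝ} {k₀ : ι} (hp : ∀ k ≠ k₀, p k ≤ 0)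
    {i j : ι} (hi : 0 < (U * diagonal p * Uᵀ) i i) (hj : 0 < (U * diagonal p * Uᵀ) j j) :
    (U * diagonal p * Uᵀ) i j ≠ 0 := by
  intro hij
  have hji : (U * diagonal p * Uᵀ) j i = 0 := by
    rw [mul_diagonal_mul_transpose_apply] at hij ⊢
    simpa only [mul_comm (U j _)] using hij
  obtain ⟨a, b, hab, horth⟩ := exists_mul_add_mul_eq_zero (U i k₀) (U j k₀)
  have hnonpos := dotProduct_mul_diagonal_mul_transpose_mulVec_nonpos (U := U) hp
    (x := Pi.single i a + Pi.single j b) (by simp [mulVec_add, mulVec_single, horth])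
  rw [single_add_single_dotProduct_mulVec, hij, hji] at hnonpos
  rcases hab with ha | hb
  · nlinarith [mul_self_pos.2 ha, mul_self_nonneg b]
  · nlinarith [mul_self_pos.2 hb, mul_self_nonneg a]

theorem pos_or_pos_of_posDef_submatrix (hU : Uᵀ * U = 1) {i : ι}
    (hA : ((U * diagonal d * Uᵀ).submatrix ((↑) : {j // j ≠ i} → ι) (↑)).PosDef) {k l : ι}
    (hkl : k ≠ l) : 0 < d k ∨ 0 < d l := by
  by_contra! hnonpos
  obtain ⟨a, b, hab, hi⟩ := exists_mul_add_mul_eq_zero (U i k) (U i l)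
  set y : ι → ℝ := Pi.single k a + Pi.single l b with hy
  have hUy : Uᵀ *ᵥ (U *ᵥ y) = y := by rw [mulVec_mulVec, hU, one_mulVec]
  have hy0 : y ≠ 0 := fun h => by
    have hk := congrFun h k
    have hl := congrFun h l
    simp only [hy, Pi.add_apply, Pi.single_eq_same, Pi.single_eq_of_ne hkl,
      Pi.single_eq_of_ne hkl.symm, add_zero, zero_add, Pi.zero_apply] at hk hl
    exact hab.elim (· hk) (· hl)
  have hpos := dotProduct_mulVec_pos_of_posDef_submatrix hA (w := U *ᵥ y)
    (by simp [hy, mulVec_add, mulVec_single, hi])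
    (fun h => hy0 (by rw [← hUy, h, mulVec_zero]))
  rw [dotProduct_mul_mul_transpose_mulVec, hUy, single_add_single_dotProduct_mulVec] at hpos
  simp only [diagonal_apply_eq, diagonal_apply_ne _ hkl, diagonal_apply_ne _ hkl.symm] at hpos
  nlinarith [mul_self_nonneg a, mul_self_nonneg b]

theorem adjugate_add_smul_one_pos (hU : Uᵀ * U = 1) {k₀ : ι} (hd : ∀ k ≠ k₀, 0 ≤ d k)
    (hPD : ∀ i : ι, ((U * diagonal d * Uᵀ).submatrix ((↑) : {j // j ≠ i} → ι) (↑)).PosDef)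
    (hadj : ∀ i j, 0 < (U * diagonal d * Uᵀ).adjugate i j) :
    ∀ t ∈ Set.Icc 0 (-d k₀), ∀ i j, 0 < (U * diagonal d * Uᵀ + t • 1).adjugate i j := by
  intro t ht i j
  have hne : ∀ s ∈ Set.Icc 0 (-d k₀), (U * diagonal d * Uᵀ + s • 1).adjugate i j ≠ 0 := by
    rintro s ⟨hs₀, hs⟩
    have hdiag m : 0 < (U * diagonal d * Uᵀ + s • 1).adjugate m m :=
      adjugate_add_smul_one_apply_self_pos (hPD m) hs₀
    simp only [mul_diagonal_mul_transpose_add_smul_one d hU,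
      adjugate_mul_diagonal_mul_transpose _ hU] at hdiag ⊢
    exact mul_diagonal_mul_transpose_apply_ne_zero
      (fun m hm => prod_erase_nonpos (by linarith) (fun k hk => by linarith [hd k hk]) hm)
      (hdiag i) (hdiag j)
  have hcont : Continuous fun s : ℝ => (U * diagonal d * Uᵀ + s • 1).adjugate i j :=
    ((continuous_const.add (continuous_id.smul continuous_const)).matrix_adjugate).matrix_elem i j
  exact isPreconnected_Icc.pos_of_ne_zero hcont.continuousOn hne
    (Set.left_mem_Icc.2 (ht.1.trans ht.2)) (by simpa using hadj i j) ht

theorem forall_ne_zero_and_same_sign_of_mulVec_eq_smul (hU : Uᵀ * U = 1) {k₀ : ι}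
    (hmin : ∀ k ≠ k₀, d k₀ < d k)
    (hadj : ∀ i j, 0 < (U * diagonal d * Uᵀ + (-d k₀) • 1).adjugate i j) {v : ι → ℝ}
    (hv : v ≠ 0) (hAv : (U * diagonal d * Uᵀ) *ᵥ v = d k₀ • v) :
    (∀ i, v i ≠ 0) ∧ ((∀ i, 0 < v i) ∨ (∀ i, v i < 0)) := by
  have hp : ∀ m ≠ k₀, ∏ l ∈ univ.erase m, (d l + -d k₀) = 0 := fun m hm =>
    prod_eq_zero (mem_erase.2 ⟨hm.symm, mem_univ _⟩) (add_neg_cancel _)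
  have hp₀ : 0 < ∏ l ∈ univ.erase k₀, (d l + -d k₀) :=
    prod_pos fun l hl => by linarith [hmin l (ne_of_mem_erase hl)]
  have hu i j : 0 < U i k₀ * U j k₀ := by
    have h := hadj i j
    rw [mul_diagonal_mul_transpose_add_smul_one d hU, adjugate_mul_diagonal_mul_transpose _ hU,
      mul_diagonal_mul_transpose_apply,
      sum_eq_single k₀ (fun m _ hm => by rw [hp m hm, zero_mul]) (by simp)] at h
    exact pos_of_mul_pos_right h hp₀.le
  have hker : (U * diagonal (fun k => d k + -d k₀) * Uᵀ) *ᵥ v = 0 := by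
    rw [← mul_diagonal_mul_transpose_add_smul_one d hU, add_mulVec, hAv, smul_mulVec,
      one_mulVec, ← add_smul, add_neg_cancel, zero_smul]
  have hv_eq := eq_smul_of_mul_diagonal_mul_transpose_mulVec_eq_zero _ hU
    (fun k hk => (by linarith [hmin k hk] : 0 < d k + -d k₀).ne') hker
  have hc : (Uᵀ *ᵥ v) k₀ ≠ 0 := fun h => hv (by rw [hv_eq, h, zero_smul])
  refine forall_ne_zero_and_same_sign_of_mul_pos fun i j => ?_
  rw [hv_eq]
  simp only [Pi.smul_apply, transpose_apply, smul_eq_mul]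
  calc 0 < (Uᵀ *ᵥ v) k₀ * (Uᵀ *ᵥ v) k₀ * (U i k₀ * U j k₀) := mul_pos (mul_self_pos.2 hc) (hu i j)
    _ = _ := by ring

end Real

end Matrix

theorem stmt11_general (n : ℕ) (A : Matrix (Fin n) (Fin n) ℝ) (hA : A ∈ Yset n) :
    ∃ lam : ℝ, 0 < lam ∧
      (∀ μ : ℝ, μ < 0 →
        (Matrix.charpoly A).rootMultiplicity μ = if μ = -lam then 1 else 0) ∧
      (∀ t ∈ Set.Icc (0 : ℝ) lam, ∀ i j, 0 < (A + t • (1 : Matrix (Fin n) (Fin n) ℝ)).adjugate i j) ∧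
      (∀ v : Fin n → ℝ, v ≠ 0 → A *ᵥ v = (-lam) • v →
        (∀ i, v i ≠ 0) ∧ ((∀ i, 0 < v i) ∨ (∀ i, v i < 0))) := by
  obtain ⟨hsymm, -, hadj, hdet, hPD⟩ := hA
  obtain ⟨U, d, hU, rfl⟩ := hsymm.exists_orthogonal_diagonalization
  rw [det_mul_diagonal_mul_transpose d hU] at hdet
  obtain ⟨k₀, hk₀, hpos⟩ := exists_neg_forall_pos_of_prod_neg hdet
    fun k l hkl => pos_or_pos_of_posDef_submatrix hU (hPD k) hkl
  have hadj_pos := adjugate_add_smul_one_pos hU (fun k hk => (hpos k hk).le) hPD hadj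
  refine ⟨-d k₀, neg_pos.2 hk₀, fun μ hμ => ?_, hadj_pos, fun v hv hAv => ?_⟩
  · rw [charpoly_mul_diagonal_mul_transpose d hU, rootMultiplicity_prod_X_sub_C, neg_neg]
    exact card_filter_eq_of_forall_pos hpos hμ.le
  · rw [neg_neg] at hAv
    exact forall_ne_zero_and_same_sign_of_mulVec_eq_smul hU
      (fun k hk => by linarith [hpos k hk]) (hadj_pos _ ⟨by linarith, le_rfl⟩) hv hAv

/-- For `A ∈ 𝒴_n`: `A` has exactly one negative eigenvalue `−λ` (with `λ > 0`), simple;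
`adj(A + t·Id)` has all entries positive for `t ∈ [0, λ]`; and every eigenvector of `A`
for `−λ` has all entries nonzero and of the same sign. -/
theorem stmt11 (n : ℕ) (hn : 2 ≤ n) (A : Matrix (Fin n) (Fin n) ℝ) (hA : A ∈ Yset n) :
    ∃ lam : ℝ, 0 < lam ∧
      (∀ μ : ℝ, μ < 0 →
        (Matrix.charpoly A).rootMultiplicity μ = if μ = -lam then 1 else 0) ∧
      (∀ t ∈ Set.Icc (0 : ℝ) lam, ∀ i j, 0 < (A + t • (1 : Matrix (Fin n) (Fin n) ℝ)).adjugate i j) ∧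
      (∀ v : Fin n → ℝ, v ≠ 0 → A *ᵥ v = (-lam) • v →
        (∀ i, v i ≠ 0) ∧ ((∀ i, 0 < v i) ∨ (∀ i, v i < 0))) :=
  stmt11_general n A hA
end

section
/- Let n ≥ 2 and let A belong to the closure of 𝒴_n in ℝ^{n×n}. If det A = 0, then A is positive semidefinite. If det A ≠ 0, then A has exactly one negative eigenvalue counted with multiplicity (i.e., A has signature (n−1, 1)). -/
/-!
Every `B ∈ 𝒴_n` is symmetric with `det B ≤ 0`, and its quadratic form is nonnegative on each
coordinate hyperplane `{w | w i = 0}`, because it restricts there to a positive definite principal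
submatrix. These three conditions are closed, so they pass to the closure. For a symmetric `A`
satisfying them, if one eigenvalue `λ` were negative and another `ν` nonpositive, a suitable
combination `w` of the two eigenvectors vanishes at some coordinate and has
`wᵀ A w = λ (⋯)² + ν (⋯)² < 0`. So either all eigenvalues are nonnegative, or exactly one is
negative and the rest are positive, and in the latter case `det A < 0`.
-/

open Matrix

open Polynomial

lemma Fintype.sum_subtype_of_eq_zero {ι M : Type*} [Fintype ι] [AddCommMonoid M]
    (p : ι → Prop) [DecidablePred p] (f : ι → M) (hf : ∀ i, ¬ p i → f i = 0) : ∑ j : {j // p j}, f j = ∑ j, f j := by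
  rw [← Fintype.sum_subtype_add_sum_subtype p f,
    Fintype.sum_eq_zero (fun j : {j // ¬ p j} => f j) (fun j => hf j j.2), add_zero]

lemma OrthonormalBasis.dotProduct_apply {ι : Type*} [Fintype ι] [DecidableEq ι]
    (b : OrthonormalBasis ι ℝ (EuclideanSpace ℝ ι)) (i j : ι) :
    ⇑(b i) ⬝ᵥ ⇑(b j) = if i = j then 1 else 0 := by
  rw [← b.inner_eq_ite, EuclideanSpace.inner_eq_star_dotProduct, star_trivial, dotProduct_comm]

namespace Matrix

variable {ι : Type*} [Fintype ι]

lemma dotProduct_mulVec_eq_submatrix {R : Type*} [NonUnitalNonAssocSemiring R]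
    (p : ι → Prop) [DecidablePred p] (A : Matrix ι ι R) {w : ι → R} (hw : ∀ i, ¬ p i → w i = 0) :
    w ⬝ᵥ A *ᵥ w = (fun j : {j // p j} => w j) ⬝ᵥ
      A.submatrix (Subtype.val : {j // p j} → ι) Subtype.val *ᵥ (fun j : {j // p j} => w j) := by
  have hrow (i : ι) : (A *ᵥ w) i = ∑ k : {j // p j}, A i k * w k :=
    (Fintype.sum_subtype_of_eq_zero p _ fun k hk => by simp [hw k hk]).symm
  calc w ⬝ᵥ A *ᵥ w = ∑ i : {j // p j}, w i * (A *ᵥ w) i :=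
        (Fintype.sum_subtype_of_eq_zero p _ fun i hi => by simp [hw i hi]).symm
    _ = _ := by simp only [hrow]; rfl

def NonnegOnCoordHyperplanes (A : Matrix ι ι ℝ) : Prop :=
  ∀ w : ι → ℝ, (∃ i, w i = 0) → 0 ≤ w ⬝ᵥ A *ᵥ w

lemma isClosed_setOf_nonnegOnCoordHyperplanes :
    IsClosed {A : Matrix ι ι ℝ | A.NonnegOnCoordHyperplanes} := by
  simp only [NonnegOnCoordHyperplanes, Set.ofPred_forall]
  exact isClosed_iInter fun w => isClosed_iInter fun _ => isClosed_le continuous_const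
    (continuous_const.dotProduct (continuous_id.matrix_mulVec continuous_const))

lemma nonnegOnCoordHyperplanes_of_posSemidef_submatrix [DecidableEq ι] {A : Matrix ι ι ℝ}
    (hA : ∀ i, (A.submatrix (Subtype.val : {j // j ≠ i} → ι) Subtype.val).PosSemidef) :
    A.NonnegOnCoordHyperplanes := by
  rintro w ⟨i, hwi⟩
  rw [dotProduct_mulVec_eq_submatrix (· ≠ i) A fun j hj => not_not.mp hj ▸ hwi]
  simpa only [star_trivial] using (hA i).dotProduct_mulVec_nonneg _

variable [DecidableEq ι] {A : Matrix ι ι ℝ}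

lemma IsHermitian.eigenvalues_pos_of_neg (hA : A.IsHermitian) (hq : A.NonnegOnCoordHyperplanes)
    {i j : ι} (hij : i ≠ j) (hi : hA.eigenvalues i < 0) : 0 < hA.eigenvalues j := by
  by_contra! hj
  set u : ι → ℝ := ⇑(hA.eigenvectorBasis i)
  set v : ι → ℝ := ⇑(hA.eigenvectorBasis j)
  obtain ⟨k, hk⟩ : ∃ k, v k ≠ 0 := by
    by_contra! hv
    exact hA.eigenvectorBasis.orthonormal.ne_zero j (PiLp.ext hv)
  set w := v k • u - u k • v
  have hw : w ⬝ᵥ A *ᵥ w = hA.eigenvalues i * v k ^ 2 + hA.eigenvalues j * u k ^ 2 := by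
    simp only [w, u, v, mulVec_sub, mulVec_smul, hA.mulVec_eigenvectorBasis, sub_dotProduct,
      dotProduct_sub, smul_dotProduct, dotProduct_smul, smul_eq_mul,
      OrthonormalBasis.dotProduct_apply, if_neg hij, if_neg hij.symm, ↓reduceIte]
    ring
  have hw_nonneg := hq w ⟨k, by simp only [w, Pi.sub_apply, Pi.smul_apply, smul_eq_mul]; ring⟩
  rw [hw] at hw_nonneg
  linarith [mul_neg_of_neg_of_pos hi (by positivity : 0 < v k ^ 2),
    mul_nonpos_of_nonpos_of_nonneg hj (sq_nonneg (u k))]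

lemma IsHermitian.det_neg_of_eigenvalues_neg (hA : A.IsHermitian)
    (hq : A.NonnegOnCoordHyperplanes) {i : ι} (hi : hA.eigenvalues i < 0) : A.det < 0 := by
  rw [hA.det_eq_prod_eigenvalues, ← Finset.mul_prod_erase _ _ (Finset.mem_univ i)]
  refine mul_neg_of_neg_of_pos (mod_cast hi) (Finset.prod_pos fun j hj => ?_)
  exact mod_cast hA.eigenvalues_pos_of_neg hq (Finset.ne_of_mem_erase hj).symm hi

lemma IsHermitian.posSemidef_of_det_eq_zero (hA : A.IsHermitian)
    (hq : A.NonnegOnCoordHyperplanes) (hdet : A.det = 0) : A.PosSemidef := by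
  refine hA.posSemidef_iff_eigenvalues_nonneg.mpr fun i => ?_
  by_contra! hi
  exact (hA.det_neg_of_eigenvalues_neg hq hi).ne hdet

lemma IsHermitian.exists_eigenvalues_neg_of_det_neg (hA : A.IsHermitian) (hdet : A.det < 0) :
    ∃ i, hA.eigenvalues i < 0 := by
  by_contra! h
  refine hdet.not_ge ?_
  rw [hA.det_eq_prod_eigenvalues]
  exact Finset.prod_nonneg fun j _ => mod_cast h j

lemma IsHermitian.rootMultiplicity_charpoly (hA : A.IsHermitian) (μ : ℝ) :
    A.charpoly.rootMultiplicity μ = (Finset.univ.filter fun j => μ = hA.eigenvalues j).card := by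
  rw [← count_roots, hA.roots_charpoly_eq_eigenvalues, Multiset.count_map, ← Finset.filter_val,
    Finset.card_val]
  simp only [Function.comp_apply, RCLike.ofReal_real_eq_id, id]

lemma IsHermitian.rootMultiplicity_charpoly_of_det_neg (hA : A.IsHermitian)
    (hq : A.NonnegOnCoordHyperplanes) (hdet : A.det < 0) :
    ∃ lam : ℝ, lam < 0 ∧ ∀ μ : ℝ, μ < 0 →
      A.charpoly.rootMultiplicity μ = if μ = lam then 1 else 0 := by
  obtain ⟨i, hi⟩ := hA.exists_eigenvalues_neg_of_det_neg hdet
  have h_eq_i {j : ι} (hj : hA.eigenvalues j < 0) : j = i := by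
    by_contra hji
    exact (hA.eigenvalues_pos_of_neg hq (Ne.symm hji) hi).not_gt hj
  refine ⟨hA.eigenvalues i, hi, fun μ hμ => ?_⟩
  have h_filter (j : ι) : μ = hA.eigenvalues j ↔ j = i ∧ μ = hA.eigenvalues i :=
    ⟨fun hj => ⟨h_eq_i (hj ▸ hμ), h_eq_i (hj ▸ hμ) ▸ hj⟩, fun ⟨hji, hμi⟩ => hji ▸ hμi⟩
  rw [hA.rootMultiplicity_charpoly]
  split_ifs with hμi
  · refine Finset.card_eq_one.mpr ⟨i, Finset.ext fun j => ?_⟩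
    simpa only [Finset.mem_filter, Finset.mem_univ, true_and, Finset.mem_singleton]
      using (h_filter j).trans (and_iff_left hμi)
  · exact Finset.card_eq_zero.mpr
      (Finset.filter_false_of_mem fun j _ hj => hμi ((h_filter j).mp hj).2)

end Matrix

lemma closure_Yset_subset (n : ℕ) :
    closure (Yset n) ⊆
      {A | A.IsHermitian ∧ A.det ≤ 0 ∧ A.NonnegOnCoordHyperplanes} := by
  refine closure_minimal (fun B ⟨hsymm, _, _, hdet, hsub⟩ => ⟨?_, hdet.le, ?_⟩) ?_
  · exact (conjTranspose_eq_transpose_of_trivial B).trans hsymm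
  · exact nonnegOnCoordHyperplanes_of_posSemidef_submatrix fun i => (hsub i).posSemidef
  · exact (isClosed_eq continuous_id.matrix_conjTranspose continuous_id).inter
      ((isClosed_le continuous_id.matrix_det continuous_const).inter
        isClosed_setOf_nonnegOnCoordHyperplanes)

theorem stmt12_general (n : ℕ) (A : Matrix (Fin n) (Fin n) ℝ)
    (hA : A ∈ closure (Yset n)) :
    (A.det = 0 → A.PosSemidef) ∧
    (A.det ≠ 0 → ∃ lam : ℝ, lam < 0 ∧
      ∀ μ : ℝ, μ < 0 →
        (Matrix.charpoly A).rootMultiplicity μ = if μ = lam then 1 else 0) := by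
  obtain ⟨hherm, hdet, hq⟩ := closure_Yset_subset n hA
  exact ⟨hherm.posSemidef_of_det_eq_zero hq,
    fun hdet0 => hherm.rootMultiplicity_charpoly_of_det_neg hq (hdet.lt_of_ne hdet0)⟩

/-- For `A` in the closure of `𝒴_n`: if `det A = 0` then `A` is positive semidefinite;
if `det A ≠ 0` then `A` has exactly one negative eigenvalue counted with multiplicity
(signature `(n−1, 1)`). -/
theorem stmt12 (n : ℕ) (hn : 2 ≤ n) (A : Matrix (Fin n) (Fin n) ℝ)
    (hA : A ∈ closure (Yset n)) :
    (A.det = 0 → A.PosSemidef) ∧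
    (A.det ≠ 0 → ∃ lam : ℝ, lam < 0 ∧
      ∀ μ : ℝ, μ < 0 →
        (Matrix.charpoly A).rootMultiplicity μ = if μ = lam then 1 else 0) :=
  stmt12_general n A hA
end

section
/- For every δ > 0 and r > 0 there exists R = R(δ, r, n) > 0 such that the following holds: let σ = C(v_1, …, v_{n+1}) be a hyperbolic n-simplex in D^n whose inradius is at least δ, let c be a center of σ (a point such that the closed hyperbolic ball of radius equal to the inradius centered at c is contained in σ), and let x ∈ σ be a point whose hyperbolic distance to each of the n+1 totally geodesic hyperplanes sp(σ_i) is at most r, where sp(σ_i) is the intersection with D^n of the affine span of {v_j : j ≠ i} and the distance from x to a set is the infimum of hyperbolic distances from x to its points. Then d(x, c) ≤ R. -/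
open MeasureTheory

/-- Inverse hyperbolic cosine: `arcosh t = log (t + √(t² − 1))`. -/
noncomputable def arcosh (t : ℝ) : ℝ := Real.log (t + Real.sqrt (t ^ 2 - 1))

/-- Hyperbolic distance between two points of the open unit ball in the projective
(Klein) model: `d(x,y) = arcosh ((1 − x·y)/√((1−|x|²)(1−|y|²)))`. -/
noncomputable def hdist (n : ℕ) (x y : EuclideanSpace ℝ (Fin n)) : ℝ :=
  arcosh ((1 - inner ℝ x y) / Real.sqrt ((1 - ‖x‖ ^ 2) * (1 - ‖y‖ ^ 2)))

/-- The closed hyperbolic ball of radius `ρ` about `c` in the Klein model. -/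
noncomputable def hClosedBall (n : ℕ) (c : EuclideanSpace ℝ (Fin n)) (ρ : ℝ) :
    Set (EuclideanSpace ℝ (Fin n)) :=
  {x | x ∈ Metric.ball (0 : EuclideanSpace ℝ (Fin n)) 1 ∧ hdist n c x ≤ ρ}

/-- The inradius of a subset of the Klein model: the supremum of radii of closed
hyperbolic balls contained in it. -/
noncomputable def inradius (n : ℕ) (σ : Set (EuclideanSpace ℝ (Fin n))) : ℝ :=
  sSup {ρ : ℝ | 0 ≤ ρ ∧ ∃ c ∈ Metric.ball (0 : EuclideanSpace ℝ (Fin n)) 1,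
    hClosedBall n c ρ ⊆ σ}

/-- A center of a subset of the Klein model: a point such that the closed hyperbolic ball
of radius the inradius about it is contained in the set. -/
def isCenter (n : ℕ) (c : EuclideanSpace ℝ (Fin n)) (σ : Set (EuclideanSpace ℝ (Fin n))) :
    Prop :=
  c ∈ Metric.ball (0 : EuclideanSpace ℝ (Fin n)) 1 ∧ hClosedBall n c (inradius n σ) ⊆ σ

/-- The hyperbolic distance from a point to a set: the infimum of the distances to its
points. -/
noncomputable def hdistSet (n : ℕ) (x : EuclideanSpace ℝ (Fin n))
    (S : Set (EuclideanSpace ℝ (Fin n))) : ℝ :=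
  sInf {d : ℝ | ∃ y ∈ S, d = hdist n x y}

/-!
Lift the Klein model to the upper sheet `⟪X, X⟫ = 1` of the hyperboloid in Minkowski space
`ℝ × ℝⁿ`, where `cosh d(x, y) = ⟪X, Y⟫`. The hyperplane of the `i`-th facet is `e_i^⊥` for a unit
spacelike `e_i`, and `⟪X, e_i⟫` is the sinh of the signed distance from `x` to it: this is at most
`sinh r` for `x`, and at least `sinh δ` for the center `c`, since otherwise a point of the `δ`-ball
about `c` would lie beyond the facet. In the basis `(1, v_k)` the `k`-th coordinate is a positive
multiple of `⟪·, e_k⟫`, so the coordinates of `X` are at most `K = sinh r / sinh δ` times those of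
`C`; pairing with `C`, which is nonnegative on every `(1, v_k)`, gives
`cosh d(x, c) = ⟪X, C⟫ ≤ K ⟪C, C⟫ = K`.
-/

open Real hiding arcosh

section Minkowski

variable {E : Type*} [NormedAddCommGroup E] [InnerProductSpace ℝ E]

noncomputable def minkowski : LinearMap.BilinForm ℝ (ℝ × E) :=
  (LinearMap.mul ℝ ℝ).compl₁₂ (LinearMap.fst ℝ ℝ E) (LinearMap.fst ℝ ℝ E) -
    (innerₗ E).compl₁₂ (LinearMap.snd ℝ ℝ E) (LinearMap.snd ℝ ℝ E)

@[simp]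
lemma minkowski_apply (X Y : ℝ × E) : minkowski X Y = X.1 * Y.1 - inner ℝ X.2 Y.2 := rfl

lemma minkowski_comm (X Y : ℝ × E) : minkowski X Y = minkowski Y X := by
  simp only [minkowski_apply, real_inner_comm, mul_comm]

lemma minkowski_self (X : ℝ × E) : minkowski X X = X.1 ^ 2 - ‖X.2‖ ^ 2 := by
  rw [minkowski_apply, real_inner_self_eq_norm_sq]; ring

lemma minkowski_self_neg_of_orthogonal {Y Z : ℝ × E} (hY : 0 < minkowski Y Y)
    (hYZ : minkowski Y Z = 0) (hZ : Z ≠ 0) : minkowski Z Z < 0 := by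
  rw [minkowski_self] at hY ⊢
  have hYZ' : Y.1 * Z.1 = inner ℝ Y.2 Z.2 := by rw [minkowski_apply] at hYZ; linarith
  have hZ2 : Z.2 ≠ 0 := by
    rintro hZ2
    have hY1 : Y.1 ≠ 0 := by rintro h; nlinarith [h ▸ hY, sq_nonneg ‖Y.2‖]
    rw [hZ2, inner_zero_right, mul_eq_zero, or_iff_right hY1] at hYZ'
    exact hZ (Prod.ext hYZ' hZ2)
  have hcs : (Y.1 * Z.1) ^ 2 ≤ (‖Y.2‖ * ‖Z.2‖) ^ 2 := by
    rw [hYZ']; exact sq_le_sq' (neg_le_of_abs_le (abs_real_inner_le_norm _ _))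
      (real_inner_le_norm _ _)
  have hZ2pos : 0 < ‖Z.2‖ ^ 2 := by positivity
  nlinarith

lemma minkowski_self_nonpos_of_orthogonal {Y Z : ℝ × E} (hY : 0 < minkowski Y Y)
    (hYZ : minkowski Y Z = 0) : minkowski Z Z ≤ 0 := by
  rcases eq_or_ne Z 0 with rfl | hZ
  · simp
  · exact (minkowski_self_neg_of_orthogonal hY hYZ hZ).le

lemma fst_pos_of_minkowski_pos {A B : ℝ × E} (hA : 0 < minkowski A A) (hB : 0 < minkowski B B)
    (hA1 : 0 < A.1) (hAB : 0 < minkowski A B) : 0 < B.1 := by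
  rw [minkowski_self, sub_pos, sq_lt_sq, abs_norm] at hA hB
  rw [abs_of_pos hA1] at hA
  by_contra! hB1
  rw [abs_of_nonpos hB1] at hB
  have : A.1 * B.1 + ‖A.2‖ * ‖B.2‖ < 0 := by nlinarith [norm_nonneg A.2, norm_nonneg B.2]
  have := neg_le_of_abs_le (abs_real_inner_le_norm A.2 B.2)
  rw [minkowski_apply] at hAB
  linarith

lemma one_le_minkowski {A B : ℝ × E} (hA : minkowski A A = 1) (hB : minkowski B B = 1)
    (hA1 : 0 < A.1) (hB1 : 0 < B.1) : 1 ≤ minkowski A B := by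
  rw [minkowski_self] at hA hB
  have hAB : 1 ≤ A.1 * B.1 := by nlinarith [sq_nonneg ‖A.2‖, sq_nonneg ‖B.2‖]
  have hnorm : ‖A.2‖ * ‖B.2‖ ≤ A.1 * B.1 - 1 := by
    refine (pow_le_pow_iff_left₀ (by positivity) (by linarith) two_ne_zero).1 ?_
    nlinarith [sq_nonneg (A.1 - B.1)]
  rw [minkowski_apply]
  linarith [real_inner_le_norm A.2 B.2]

lemma minkowski_sq_le_of_orthogonal {P Y e : ℝ × E} (hP : minkowski P P = 1)
    (hY : minkowski Y Y = 1) (he : minkowski e e = -1) (hYe : minkowski Y e = 0) :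
    minkowski P e ^ 2 ≤ minkowski P Y ^ 2 - 1 := by
  set p := minkowski P Y
  set a := minkowski P e
  have hZY : minkowski Y (P - p • Y + a • e) = 0 := by
    simp only [map_add, map_sub, map_smul, smul_eq_mul, hY, hYe, minkowski_comm Y P]
    ring
  have hZZ := minkowski_self_nonpos_of_orthogonal (by rw [hY]; exact one_pos) hZY
  have hexp : minkowski (P - p • Y + a • e) (P - p • Y + a • e) = 1 - p ^ 2 + a ^ 2 := by
    simp only [map_add, map_sub, map_smul, LinearMap.add_apply, LinearMap.sub_apply,
      LinearMap.smul_apply, smul_eq_mul, hP, hY, he, hYe, minkowski_comm Y P, minkowski_comm e P,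
      minkowski_comm e Y]
    ring
  linarith

lemma exists_minkowski_eq_cosh_of_lt_sinh {C e : ℝ × E} {δ : ℝ} (hC : minkowski C C = 1)
    (hC1 : 0 < C.1) (he : minkowski e e = -1) (hCe : minkowski C e < sinh δ) :
    ∃ Y : ℝ × E, minkowski Y Y = 1 ∧ 0 < Y.1 ∧ minkowski C Y = cosh δ ∧ minkowski Y e < 0 := by
  -- write `minkowski C e = sinh a`; `Y` is obtained from `C` by moving a distance `δ` towards the
  -- hyperplane `e^⊥`, and `minkowski Y e = sinh (a - δ)`
  set a := arsinh (minkowski C e)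
  have hsa : sinh a = minkowski C e := sinh_arsinh _
  have hca : cosh a ^ 2 = 1 + sinh a ^ 2 := by rw [cosh_sq]; ring
  have hca0 : cosh a ≠ 0 := (cosh_pos a).ne'
  set u := (cosh a)⁻¹ • (e - sinh a • C)
  have hCu : minkowski C u = 0 := by
    simp only [u, map_smul, map_sub, smul_eq_mul, hC, hsa]; ring
  have huu : minkowski u u = -1 := by
    simp only [u, map_smul, map_sub, LinearMap.smul_apply, LinearMap.sub_apply, smul_eq_mul, hC,
      he, minkowski_comm e C, ← hsa]
    field_simp
    linear_combination hca
  have hue : minkowski u e = -cosh a := by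
    simp only [u, map_smul, LinearMap.smul_apply, LinearMap.sub_apply, map_sub, smul_eq_mul, he,
      ← hsa]
    field_simp
    linear_combination hca
  have hYY : minkowski (cosh δ • C + sinh δ • u) (cosh δ • C + sinh δ • u) = 1 := by
    simp only [map_add, map_smul, LinearMap.add_apply, LinearMap.smul_apply, smul_eq_mul, hC, huu,
      hCu, minkowski_comm u C]
    linear_combination cosh_sq_sub_sinh_sq δ
  have hCY : minkowski C (cosh δ • C + sinh δ • u) = cosh δ := by
    simp only [map_add, map_smul, smul_eq_mul, hC, hCu]; ring
  refine ⟨cosh δ • C + sinh δ • u, hYY, ?_, hCY, ?_⟩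
  · exact fst_pos_of_minkowski_pos (by rw [hC]; exact one_pos) (by rw [hYY]; exact one_pos) hC1
      (by rw [hCY]; exact cosh_pos δ)
  · have hYe : minkowski (cosh δ • C + sinh δ • u) e = sinh (a - δ) := by
      simp only [map_add, map_smul, LinearMap.add_apply, LinearMap.smul_apply, smul_eq_mul, hue,
        ← hsa, sinh_sub]
      ring
    rw [hYe, sinh_neg_iff, sub_neg, ← sinh_lt_sinh, hsa]
    exact hCe

end Minkowski

lemma one_sub_norm_sq_pos {F : Type*} [SeminormedAddCommGroup F] {z : F} (hz : ‖z‖ < 1) :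
    0 < 1 - ‖z‖ ^ 2 := by
  nlinarith [norm_nonneg z]

section Hyperboloid

variable {E : Type*} [NormedAddCommGroup E] [InnerProductSpace ℝ E]

noncomputable def toHyperboloid (z : E) : ℝ × E := (√(1 - ‖z‖ ^ 2))⁻¹ • ((1 : ℝ), z)

lemma minkowski_toHyperboloid_left (z : E) (Y : ℝ × E) :
    minkowski (toHyperboloid z) Y = (√(1 - ‖z‖ ^ 2))⁻¹ * minkowski ((1 : ℝ), z) Y := by
  rw [toHyperboloid, map_smul, LinearMap.smul_apply, smul_eq_mul]

lemma minkowski_toHyperboloid {x : E} (hx : ‖x‖ < 1) (y : E) :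
    minkowski (toHyperboloid x) (toHyperboloid y) =
      (1 - inner ℝ x y) / √((1 - ‖x‖ ^ 2) * (1 - ‖y‖ ^ 2)) := by
  rw [minkowski_toHyperboloid_left, toHyperboloid, map_smul, smul_eq_mul, minkowski_apply,
    Real.sqrt_mul (one_sub_norm_sq_pos hx).le]
  field_simp

lemma minkowski_toHyperboloid_self {z : E} (hz : ‖z‖ < 1) :
    minkowski (toHyperboloid z) (toHyperboloid z) = 1 := by
  rw [minkowski_toHyperboloid hz, real_inner_self_eq_norm_sq,
    Real.sqrt_mul_self (one_sub_norm_sq_pos hz).le, div_self (one_sub_norm_sq_pos hz).ne']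

lemma toHyperboloid_fst_pos {z : E} (hz : ‖z‖ < 1) : 0 < (toHyperboloid z).1 := by
  simpa [toHyperboloid] using one_sub_norm_sq_pos hz

lemma exists_toHyperboloid_eq {Y : ℝ × E} (hY : minkowski Y Y = 1) (hY1 : 0 < Y.1) :
    ∃ y : E, ‖y‖ < 1 ∧ toHyperboloid y = Y := by
  rw [minkowski_self] at hY
  have hy : 1 - ‖(Y.1)⁻¹ • Y.2‖ ^ 2 = (Y.1)⁻¹ ^ 2 := by
    rw [norm_smul, norm_inv, Real.norm_of_nonneg hY1.le]
    field_simp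
    linarith
  refine ⟨(Y.1)⁻¹ • Y.2, ?_, ?_⟩
  · nlinarith [pow_pos (inv_pos.2 hY1) 2, norm_nonneg ((Y.1)⁻¹ • Y.2)]
  · rw [toHyperboloid, hy, Real.sqrt_sq (inv_pos.2 hY1).le, inv_inv]
    ext
    · simp
    · simp [smul_smul, hY1.ne']

end Hyperboloid

section KleinModel

variable {n : ℕ}

lemma hdist_eq_arcosh_minkowski {x : EuclideanSpace ℝ (Fin n)} (hx : ‖x‖ < 1)
    (y : EuclideanSpace ℝ (Fin n)) :
    hdist n x y = Real.arcosh (minkowski (toHyperboloid x) (toHyperboloid y)) := by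
  rw [minkowski_toHyperboloid hx]
  rfl

lemma hdist_self {x : EuclideanSpace ℝ (Fin n)} (hx : ‖x‖ < 1) : hdist n x x = 0 := by
  rw [hdist_eq_arcosh_minkowski hx, minkowski_toHyperboloid_self hx, Real.arcosh_zero]

lemma sinh_le_minkowski_of_forall_hClosedBall {c : EuclideanSpace ℝ (Fin n)}
    {e : ℝ × EuclideanSpace ℝ (Fin n)} {δ : ℝ} (hc : ‖c‖ < 1) (he : minkowski e e = -1)
    (hδ : 0 ≤ δ) (h : ∀ y ∈ hClosedBall n c δ, 0 ≤ minkowski ((1 : ℝ), y) e) :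
    sinh δ ≤ minkowski (toHyperboloid c) e := by
  by_contra! hlt
  obtain ⟨Y, hY, hY1, hcY, hYe⟩ := exists_minkowski_eq_cosh_of_lt_sinh
    (minkowski_toHyperboloid_self hc) (toHyperboloid_fst_pos hc) he hlt
  obtain ⟨y, hy, rfl⟩ := exists_toHyperboloid_eq hY hY1
  have hcy : hdist n c y = δ := by
    rw [hdist_eq_arcosh_minkowski hc, hcY, Real.arcosh_cosh hδ]
  have hye := mul_nonneg (inv_nonneg.2 (Real.sqrt_nonneg (1 - ‖y‖ ^ 2)))
    (h y ⟨mem_ball_zero_iff.2 hy, hcy.le⟩)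
  rw [minkowski_toHyperboloid_left] at hYe
  linarith

lemma minkowski_le_sinh_hdist {x y : EuclideanSpace ℝ (Fin n)} {e : ℝ × EuclideanSpace ℝ (Fin n)}
    (hx : ‖x‖ < 1) (hy : ‖y‖ < 1) (he : minkowski e e = -1)
    (hye : minkowski ((1 : ℝ), y) e = 0) :
    minkowski (toHyperboloid x) e ≤ sinh (hdist n x y) := by
  have hYe : minkowski (toHyperboloid y) e = 0 := by
    rw [minkowski_toHyperboloid_left, hye, mul_zero]
  rw [hdist_eq_arcosh_minkowski hx, Real.sinh_arcosh (one_le_minkowski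
    (minkowski_toHyperboloid_self hx) (minkowski_toHyperboloid_self hy)
    (toHyperboloid_fst_pos hx) (toHyperboloid_fst_pos hy))]
  exact (le_abs_self _).trans (Real.abs_le_sqrt (minkowski_sq_le_of_orthogonal
    (minkowski_toHyperboloid_self hx) (minkowski_toHyperboloid_self hy) he hYe))

lemma minkowski_le_sinh_of_hdistSet_le {x : EuclideanSpace ℝ (Fin n)}
    {e : ℝ × EuclideanSpace ℝ (Fin n)} {S : Set (EuclideanSpace ℝ (Fin n))} {r : ℝ}
    (hx : ‖x‖ < 1) (he : minkowski e e = -1) (hr : hdistSet n x (S ∩ Metric.ball 0 1) ≤ r)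
    (hS : ∀ y ∈ S, minkowski ((1 : ℝ), y) e = 0) (hne : (S ∩ Metric.ball 0 1).Nonempty) :
    minkowski (toHyperboloid x) e ≤ sinh r := by
  suffices arsinh (minkowski (toHyperboloid x) e) ≤ r by
    rwa [← sinh_le_sinh, sinh_arsinh] at this
  refine (le_csInf ?_ ?_).trans hr
  · obtain ⟨y, hy⟩ := hne
    exact ⟨_, y, hy, rfl⟩
  · rintro _ ⟨y, ⟨hyS, hy⟩, rfl⟩
    rw [← arsinh_sinh (hdist n x y), arsinh_le_arsinh]
    exact minkowski_le_sinh_hdist hx (mem_ball_zero_iff.1 hy) he (hS y hyS)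

end KleinModel

lemma AffineMap.apply_eq_of_mem_affineSpan {k V₁ P₁ V₂ P₂ : Type*} [Ring k] [AddCommGroup V₁]
    [Module k V₁] [AddTorsor V₁ P₁] [AddCommGroup V₂] [Module k V₂] [AddTorsor V₂ P₂]
    (f : P₁ →ᵃ[k] P₂) {s : Set P₁} {q : P₂} (hs : ∀ p ∈ s, f p = q) {p : P₁}
    (hp : p ∈ affineSpan k s) : f p = q := by
  have hfp : f p ∈ affineSpan k (f '' s) :=
    AffineSubspace.map_span f s ▸ AffineSubspace.mem_map.2 ⟨p, hp, rfl⟩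
  rw [← AffineSubspace.mem_affineSpan_singleton k V₂]
  refine affineSpan_mono k ?_ hfp
  rintro _ ⟨p, hp, rfl⟩
  exact hs p hp

lemma AffineBasis.coord_eq_zero_of_mem_affineSpan {ι k V P : Type*} [Ring k] [AddCommGroup V]
    [Module k V] [AddTorsor V P] (b : AffineBasis ι k P) {i : ι} {p : P}
    (hp : p ∈ affineSpan k (Set.range fun j : {j // j ≠ i} => b j)) : b.coord i p = 0 :=
  (b.coord i).apply_eq_of_mem_affineSpan (by rintro _ ⟨j, rfl⟩; exact b.coord_apply_ne j.2.symm) hp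

lemma AffineBasis.prod_one_eq_sum_coord_smul {ι k V : Type*} [Fintype ι] [Ring k]
    [AddCommGroup V] [Module k V] (b : AffineBasis ι k V) (z : V) :
    ((1 : k), z) = ∑ i, b.coord i z • ((1 : k), b i) := by
  ext
  · simp [Prod.fst_sum]
  · simp [Prod.snd_sum]

section Simplex

variable {ι E : Type*} [NormedAddCommGroup E] [InnerProductSpace ℝ E]

lemma exists_unit_normal [FiniteDimensional ℝ E] (b : AffineBasis ι ℝ E) {i j : ι} (hji : j ≠ i)
    (hj : ‖b j‖ < 1) :
    ∃ e : ℝ × E, minkowski e e = -1 ∧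
      ∃ m > 0, ∀ z, minkowski ((1 : ℝ), z) e = m * b.coord i z := by
  set g := (InnerProductSpace.toDual ℝ E).symm (LinearMap.toContinuousLinearMap (b.coord i).linear)
  set e₀ : ℝ × E := (b.coord i 0, -g)
  have he₀ : ∀ z, minkowski ((1 : ℝ), z) e₀ = b.coord i z := by
    intro z
    rw [minkowski_apply, inner_neg_right, real_inner_comm, InnerProductSpace.toDual_symm_apply,
      LinearMap.coe_toContinuousLinearMap', congrFun (AffineMap.decomp (b.coord i)) z]
    simp only [Pi.add_apply, e₀]
    ring
  have hneg : minkowski e₀ e₀ < 0 := by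
    refine minkowski_self_neg_of_orthogonal (Y := ((1 : ℝ), b j)) ?_ ?_ ?_
    · simpa [minkowski_self] using one_sub_norm_sq_pos hj
    · rw [he₀, b.coord_apply_ne hji.symm]
    · rintro he₀0
      simpa [he₀0] using he₀ (b i)
  have hsqrt : 0 < √(-minkowski e₀ e₀) := Real.sqrt_pos.2 (neg_pos.2 hneg)
  refine ⟨(√(-minkowski e₀ e₀))⁻¹ • e₀, ?_, _, inv_pos.2 hsqrt, fun z => ?_⟩
  · simp only [map_smul, LinearMap.smul_apply, smul_eq_mul]
    field_simp
    rw [Real.sq_sqrt (neg_pos.2 hneg).le]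
    ring
  · rw [map_smul, smul_eq_mul, he₀]

lemma minkowski_toHyperboloid_le_of_forall [Fintype ι] (b : AffineBasis ι ℝ E)
    (hb : ∀ k, ‖b k‖ < 1) {x c : E} (hc : ‖c‖ < 1) {e : ι → ℝ × E} {m : ι → ℝ}
    (hm : ∀ k, 0 < m k) (he : ∀ k z, minkowski ((1 : ℝ), z) (e k) = m k * b.coord k z) {K : ℝ}
    (h : ∀ k, minkowski (toHyperboloid x) (e k) ≤ K * minkowski (toHyperboloid c) (e k)) :
    minkowski (toHyperboloid x) (toHyperboloid c) ≤ K := by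
  have hexp : ∀ z, minkowski (toHyperboloid z) (toHyperboloid c) =
      ∑ k, (√(1 - ‖z‖ ^ 2))⁻¹ * b.coord k z * minkowski ((1 : ℝ), b k) (toHyperboloid c) := by
    intro z
    rw [minkowski_toHyperboloid_left, b.prod_one_eq_sum_coord_smul z, map_sum,
      LinearMap.sum_apply, Finset.mul_sum]
    simp only [map_smul, LinearMap.smul_apply, smul_eq_mul, mul_assoc]
  have hcoord : ∀ k, (√(1 - ‖x‖ ^ 2))⁻¹ * b.coord k x ≤ K * ((√(1 - ‖c‖ ^ 2))⁻¹ * b.coord k c) := by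
    intro k
    have hk := h k
    rw [minkowski_toHyperboloid_left, he, minkowski_toHyperboloid_left, he] at hk
    refine le_of_mul_le_mul_left ?_ (hm k)
    linarith
  have hvert : ∀ k, 0 ≤ minkowski ((1 : ℝ), b k) (toHyperboloid c) := by
    intro k
    rw [minkowski_comm, minkowski_toHyperboloid_left, minkowski_apply]
    have hinner := (real_inner_le_norm c (b k)).trans_lt
      (mul_lt_one_of_nonneg_of_lt_one_left (norm_nonneg c) hc (hb k).le)
    exact mul_nonneg (inv_nonneg.2 (Real.sqrt_nonneg _)) (by linarith)
  calc minkowski (toHyperboloid x) (toHyperboloid c)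
      = ∑ k, (√(1 - ‖x‖ ^ 2))⁻¹ * b.coord k x * minkowski ((1 : ℝ), b k) (toHyperboloid c) :=
        hexp x
    _ ≤ ∑ k, K * ((√(1 - ‖c‖ ^ 2))⁻¹ * b.coord k c) *
          minkowski ((1 : ℝ), b k) (toHyperboloid c) :=
        Finset.sum_le_sum fun k _ => mul_le_mul_of_nonneg_right (hcoord k) (hvert k)
    _ = K * minkowski (toHyperboloid c) (toHyperboloid c) := by
        rw [hexp c, Finset.mul_sum]
        simp only [mul_assoc]
    _ = K := by rw [minkowski_toHyperboloid_self hc, mul_one]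

lemma sinh_le_minkowski_of_hClosedBall_subset {n : ℕ}
    (b : AffineBasis ι ℝ (EuclideanSpace ℝ (Fin n))) {i : ι} {e : ℝ × EuclideanSpace ℝ (Fin n)}
    {m : ℝ} (he : minkowski e e = -1) (hm : 0 < m)
    (hem : ∀ z, minkowski ((1 : ℝ), z) e = m * b.coord i z) {c : EuclideanSpace ℝ (Fin n)}
    (hc : ‖c‖ < 1) {δ : ℝ} (hδ : 0 ≤ δ) (hcσ : hClosedBall n c δ ⊆ convexHull ℝ (Set.range b)) :
    sinh δ ≤ minkowski (toHyperboloid c) e := by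
  refine sinh_le_minkowski_of_forall_hClosedBall hc he hδ fun y hy => ?_
  rw [hem]
  exact mul_nonneg hm.le ((b.convexHull_eq_nonneg_coord ▸ hcσ hy) i)

end Simplex

theorem stmt18_general (n : ℕ) (δ r : ℝ) (hδ : 0 < δ) :
    ∃ R : ℝ, 0 < R ∧
      ∀ v : Fin (n + 1) → EuclideanSpace ℝ (Fin n),
        (∀ i, v i ∈ Metric.ball (0 : EuclideanSpace ℝ (Fin n)) 1) →
        AffineIndependent ℝ v →
        δ ≤ inradius n (convexHull ℝ (Set.range v)) →
        ∀ c, isCenter n c (convexHull ℝ (Set.range v)) →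
        ∀ x ∈ convexHull ℝ (Set.range v),
          (∀ i : Fin (n + 1),
            hdistSet n x
              ((affineSpan ℝ (Set.range fun j : {j : Fin (n + 1) // j ≠ i} => v j) :
                  Set (EuclideanSpace ℝ (Fin n))) ∩
                Metric.ball (0 : EuclideanSpace ℝ (Fin n)) 1) ≤ r) →
          hdist n x c ≤ R := by
  set K := max 1 (sinh r / sinh δ)
  have hK : 1 ≤ K := le_max_left _ _
  have hR : 0 < Real.arcosh K + 1 := by linarith [Real.arcosh_nonneg hK]
  refine ⟨Real.arcosh K + 1, hR, ?_⟩
  intro v hv hind hδσ c hc x hxσ hxr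
  have hσ : convexHull ℝ (Set.range v) ⊆ Metric.ball 0 1 :=
    convexHull_min (Set.range_subset_iff.2 hv) (convex_ball 0 1)
  have hx : ‖x‖ < 1 := mem_ball_zero_iff.1 (hσ hxσ)
  have hc1 : ‖c‖ < 1 := mem_ball_zero_iff.1 hc.1
  rcases n with _ | n
  · rw [Subsingleton.elim x c, hdist_self hc1]
    exact hR.le
  let b : AffineBasis (Fin (n + 2)) ℝ (EuclideanSpace ℝ (Fin (n + 1))) :=
    ⟨v, hind, by simp [hind.affineSpan_eq_top_iff_card_eq_finrank_add_one]⟩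
  choose e he m hm hem using fun i : Fin (n + 2) =>
    exists_unit_normal b (exists_ne i).choose_spec (mem_ball_zero_iff.1 (hv _))
  have hface (i : Fin (n + 2)) :
      minkowski (toHyperboloid x) (e i) ≤ K * minkowski (toHyperboloid c) (e i) := by
    obtain ⟨j, hji⟩ := exists_ne i
    have hwall := minkowski_le_sinh_of_hdistSet_le hx (he i) (hxr i)
      (fun y hy => by rw [hem, b.coord_eq_zero_of_mem_affineSpan hy, mul_zero])
      ⟨v j, subset_affineSpan ℝ _ ⟨⟨j, hji⟩, rfl⟩, hv j⟩
    have hcenter := sinh_le_minkowski_of_hClosedBall_subset b (he i) (hm i) (hem i) hc1 hδ.le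
      fun y hy => hc.2 ⟨hy.1, hy.2.trans hδσ⟩
    calc _ ≤ sinh r := hwall
      _ ≤ K * sinh δ := (div_le_iff₀ (sinh_pos_iff.2 hδ)).1 (le_max_right _ _)
      _ ≤ _ := mul_le_mul_of_nonneg_left hcenter (zero_le_one.trans hK)
  have hxc := minkowski_toHyperboloid_le_of_forall b (fun k => mem_ball_zero_iff.1 (hv k)) hc1
    hm hem hface
  have hxc1 := one_le_minkowski (minkowski_toHyperboloid_self hx)
    (minkowski_toHyperboloid_self hc1) (toHyperboloid_fst_pos hx) (toHyperboloid_fst_pos hc1)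
  rw [hdist_eq_arcosh_minkowski hx]
  linarith [(Real.arcosh_le_arcosh (by linarith) (by linarith)).2 hxc]

/-- Lemma 4.3: for every `δ, r > 0` there is `R` such that for every hyperbolic
`n`-simplex `σ` of inradius at least `δ` with center `c`, every point `x ∈ σ` within
hyperbolic distance `r` from each of the `n+1` totally geodesic hyperplanes spanned by
the codimension-1 faces satisfies `d(x, c) ≤ R`. -/
theorem stmt18 (n : ℕ) (δ r : ℝ) (hδ : 0 < δ) (hr : 0 < r) :
    ∃ R : ℝ, 0 < R ∧
      ∀ v : Fin (n + 1) → EuclideanSpace ℝ (Fin n),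
        (∀ i, v i ∈ Metric.ball (0 : EuclideanSpace ℝ (Fin n)) 1) →
        AffineIndependent ℝ v →
        δ ≤ inradius n (convexHull ℝ (Set.range v)) →
        ∀ c, isCenter n c (convexHull ℝ (Set.range v)) →
        ∀ x ∈ convexHull ℝ (Set.range v),
          (∀ i : Fin (n + 1),
            hdistSet n x
              ((affineSpan ℝ (Set.range fun j : {j : Fin (n + 1) // j ≠ i} => v j) :
                  Set (EuclideanSpace ℝ (Fin n))) ∩
                Metric.ball (0 : EuclideanSpace ℝ (Fin n)) 1) ≤ r) →
          hdist n x c ≤ R :=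
  stmt18_general n δ r hδ
end
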